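/- arXiv:2307.09411 — 6 statements merged into one kernel-verified Lean document; each statement's English description precedes it below -/
import Mathlib

section
/- Single crossing for CARA with respect to the risk-aversion parameter: for two insurance contracts with deductibles d₁ > d₂ ≥ 0 and premiums x₁ < x₂ satisfying x₂ - x₁ < d₁ - d₂ and x₂ - x₁ > μ(d₁ - d₂) for μ ∈ (0,1), the function Δ(ν) = CE_ν(contract 2) - CE_ν(contract 1) is continuous and strictly increasing in ν on (0,∞), is negative as ν → 0⁺ and positive as ν → ∞, hence has a unique zero ν* > 0; the agent strictly prefers contract 2 (lower deductible) iff ν > ν*. -/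
/-!
Write `K(t) = log (1 - μ + μ eᵗ)` for the cumulant generating function of a Bernoulli(μ) loss,
so that `CE_ν(d, x) = -x - K(ν d) / ν` and `Δ(ν) = x₁ - x₂ + K(ν d₁)/ν - K(ν d₂)/ν`.
Differentiating, `ν² Δ'(ν) = L(ν d₁) - L(ν d₂)` with `L(t) = t K'(t) - K(t)`, and `L' = t K''`
is positive for `t > 0`, so `Δ` is strictly increasing. As `ν → 0⁺`, `K(ν d)/ν → K'(0) d = μ d`,
so `Δ → μ (d₁ - d₂) - (x₂ - x₁) < 0`; and `t + log μ ≤ K(t) ≤ t` for `t ≥ 0` squeezes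
`K(ν d)/ν` to `d` as `ν → ∞`, so `Δ → (d₁ - d₂) - (x₂ - x₁) > 0`.
The unique crossing point then comes from the intermediate value theorem.
-/

open Real Filter Set Topology

theorem StrictMonoOn.existsUnique_zero_and_pos_iff {s : Set ℝ} {f : ℝ → ℝ}
    (hs : IsPreconnected s) (hcont : ContinuousOn f s) (hmono : StrictMonoOn f s)
    {a b : ℝ} (ha : a ∈ s) (hb : b ∈ s) (hfa : f a < 0) (hfb : 0 < f b) :
    ∃! c, c ∈ s ∧ f c = 0 ∧ ∀ x ∈ s, (0 < f x ↔ c < x) := by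
  obtain ⟨c, hc, hfc⟩ := hs.intermediate_value ha hb hcont ⟨hfa.le, hfb.le⟩
  refine ⟨c, ⟨hc, hfc, fun x hx => ?_⟩, fun y ⟨hy, hfy, _⟩ => ?_⟩
  · rw [← hfc]
    exact hmono.lt_iff_lt hc hx
  · exact hmono.injOn hy hc (hfy.trans hfc.symm)

namespace CARA

variable {μ : ℝ}

noncomputable def bernCGF (μ t : ℝ) : ℝ := log (1 - μ + μ * exp t)

/-- The success probability of the exponentially tilted Bernoulli(μ) law. -/
noncomputable def bernTilt (μ t : ℝ) : ℝ := μ * exp t / (1 - μ + μ * exp t)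

/-- The certainty-equivalent loss, under CARA with risk aversion `ν`, of losing `d` with
probability `μ`: `CE_ν(d, x) = -x - caraLoss μ d ν`. -/
noncomputable def caraLoss (μ d ν : ℝ) : ℝ := bernCGF μ (ν * d) / ν

lemma one_sub_add_mul_exp_pos (hμ0 : 0 ≤ μ) (hμ1 : μ ≤ 1) (t : ℝ) : 0 < 1 - μ + μ * exp t := by
  rcases hμ1.lt_or_eq with hμ1 | rfl
  · have := mul_nonneg hμ0 (exp_pos t).le
    linarith
  · simpa using exp_pos t

lemma bernCGF_zero : bernCGF μ 0 = 0 := by simp [bernCGF]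

lemma bernTilt_zero : bernTilt μ 0 = μ := by simp [bernTilt]

lemma hasDerivAt_one_sub_add_mul_exp (t : ℝ) :
    HasDerivAt (fun t => 1 - μ + μ * exp t) (μ * exp t) t :=
  ((hasDerivAt_exp t).const_mul μ).const_add (1 - μ)

lemma hasDerivAt_bernCGF (hμ0 : 0 ≤ μ) (hμ1 : μ ≤ 1) (t : ℝ) :
    HasDerivAt (bernCGF μ) (bernTilt μ t) t :=
  (hasDerivAt_one_sub_add_mul_exp t).log (one_sub_add_mul_exp_pos hμ0 hμ1 t).ne'

lemma hasDerivAt_bernTilt (hμ0 : 0 ≤ μ) (hμ1 : μ ≤ 1) (t : ℝ) :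
    HasDerivAt (bernTilt μ) (μ * (1 - μ) * exp t / (1 - μ + μ * exp t) ^ 2) t := by
  have hA := (one_sub_add_mul_exp_pos hμ0 hμ1 t).ne'
  refine (((hasDerivAt_exp t).const_mul μ).div
    (hasDerivAt_one_sub_add_mul_exp t) hA).congr_deriv ?_
  ring

lemma bernCGF_le_self (hμ0 : 0 ≤ μ) (hμ1 : μ ≤ 1) {t : ℝ} (ht : 0 ≤ t) : bernCGF μ t ≤ t := by
  have hexp : 1 ≤ exp t := one_le_exp ht
  calc bernCGF μ t ≤ log (exp t) := log_le_log (one_sub_add_mul_exp_pos hμ0 hμ1 t) (by nlinarith)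
    _ = t := log_exp t

lemma add_log_le_bernCGF (hμ0 : 0 < μ) (hμ1 : μ ≤ 1) (t : ℝ) : t + log μ ≤ bernCGF μ t :=
  calc t + log μ = log (μ * exp t) := by rw [log_mul hμ0.ne' (exp_ne_zero t), log_exp, add_comm]
    _ ≤ bernCGF μ t := log_le_log (by positivity) (by linarith)

lemma strictMonoOn_mul_bernTilt_sub_bernCGF (hμ0 : 0 < μ) (hμ1 : μ < 1) :
    StrictMonoOn (fun t => t * bernTilt μ t - bernCGF μ t) (Ici 0) := by
  have hderiv (t : ℝ) : HasDerivAt (fun t => t * bernTilt μ t - bernCGF μ t)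
      (t * (μ * (1 - μ) * exp t / (1 - μ + μ * exp t) ^ 2)) t := by
    refine (((hasDerivAt_id t).mul (hasDerivAt_bernTilt hμ0.le hμ1.le t)).sub
      (hasDerivAt_bernCGF hμ0.le hμ1.le t)).congr_deriv ?_
    simp only [id, bernTilt]
    field_simp
    ring
  refine strictMonoOn_of_hasDerivWithinAt_pos (convex_Ici 0)
    (fun t _ => (hderiv t).continuousAt.continuousWithinAt)
    (fun t _ => (hderiv t).hasDerivWithinAt) fun t ht => ?_
  rw [interior_Ici] at ht
  have hμ1' := sub_pos.2 hμ1
  exact mul_pos ht (by positivity)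

lemma hasDerivAt_caraLoss (hμ0 : 0 ≤ μ) (hμ1 : μ ≤ 1) (d : ℝ) {ν : ℝ} (hν : ν ≠ 0) :
    HasDerivAt (caraLoss μ d)
      ((ν * d * bernTilt μ (ν * d) - bernCGF μ (ν * d)) / ν ^ 2) ν := by
  have hK := (hasDerivAt_bernCGF hμ0 hμ1 (ν * d)).comp ν (hasDerivAt_mul_const d)
  refine (hK.div (hasDerivAt_id ν) hν).congr_deriv ?_
  simp only [id, Function.comp_apply]
  ring

lemma continuousOn_caraLoss (hμ0 : 0 ≤ μ) (hμ1 : μ ≤ 1) (d : ℝ) :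
    ContinuousOn (caraLoss μ d) (Ioi 0) := fun _ hν =>
  (hasDerivAt_caraLoss hμ0 hμ1 d (ne_of_gt hν)).continuousAt.continuousWithinAt

lemma tendsto_caraLoss_nhdsGT_zero (hμ0 : 0 ≤ μ) (hμ1 : μ ≤ 1) (d : ℝ) :
    Tendsto (caraLoss μ d) (𝓝[>] 0) (𝓝 (μ * d)) := by
  have hK : HasDerivAt (bernCGF μ ∘ fun ν => ν * d) (μ * d) 0 := by
    simpa [bernTilt_zero] using
      (hasDerivAt_bernCGF hμ0 hμ1 (0 * d)).comp (0 : ℝ) (hasDerivAt_mul_const d)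
  refine ((hasDerivAt_iff_tendsto_slope.mp hK).mono_left
    (nhdsWithin_mono 0 fun ν (hν : 0 < ν) => hν.ne')).congr fun ν => ?_
  simp [slope_def_field, caraLoss, bernCGF_zero]

lemma strictMonoOn_caraLoss_sub_caraLoss (hμ0 : 0 < μ) (hμ1 : μ < 1) {d₁ d₂ : ℝ}
    (hd₂ : 0 ≤ d₂) (hd : d₂ < d₁) :
    StrictMonoOn (fun ν => caraLoss μ d₁ ν - caraLoss μ d₂ ν) (Ioi 0) := by
  have hderiv {ν : ℝ} (hν : 0 < ν) := (hasDerivAt_caraLoss hμ0.le hμ1.le d₁ hν.ne').sub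
    (hasDerivAt_caraLoss hμ0.le hμ1.le d₂ hν.ne')
  refine strictMonoOn_of_hasDerivWithinAt_pos (convex_Ioi 0)
    (fun ν hν => (hderiv hν).continuousAt.continuousWithinAt)
    (fun ν hν => (hderiv (interior_subset hν)).hasDerivWithinAt) fun ν hν => ?_
  rw [interior_Ioi, mem_Ioi] at hν
  have hlt : ν * d₂ < ν * d₁ := mul_lt_mul_of_pos_left hd hν
  have hd₂ν : 0 ≤ ν * d₂ := mul_nonneg hν.le hd₂
  have hL := strictMonoOn_mul_bernTilt_sub_bernCGF hμ0 hμ1 hd₂ν (hd₂ν.trans hlt.le) hlt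
  rw [← sub_div]
  exact div_pos (by linarith) (by positivity)

lemma caraLoss_le (hμ0 : 0 ≤ μ) (hμ1 : μ ≤ 1) {d ν : ℝ} (hd : 0 ≤ d) (hν : 0 < ν) :
    caraLoss μ d ν ≤ d := by
  rw [caraLoss, div_le_iff₀ hν]
  linarith [bernCGF_le_self hμ0 hμ1 (mul_nonneg hν.le hd)]

lemma add_log_div_le_caraLoss (hμ0 : 0 < μ) (hμ1 : μ ≤ 1) (d : ℝ) {ν : ℝ} (hν : 0 < ν) :
    d + log μ / ν ≤ caraLoss μ d ν := by
  rw [caraLoss, le_div_iff₀ hν, add_mul, div_mul_cancel₀ _ hν.ne']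
  linarith [add_log_le_bernCGF hμ0 hμ1 (ν * d)]

lemma tendsto_caraLoss_atTop (hμ0 : 0 < μ) (hμ1 : μ ≤ 1) {d : ℝ} (hd : 0 ≤ d) :
    Tendsto (caraLoss μ d) atTop (𝓝 d) := by
  have hlower : Tendsto (fun ν => d + log μ / ν) atTop (𝓝 d) := by
    simpa using (tendsto_const_nhds.div_atTop tendsto_id).const_add d
  refine tendsto_of_tendsto_of_tendsto_of_le_of_le' hlower tendsto_const_nhds ?_ ?_ <;>
    filter_upwards [eventually_gt_atTop 0] with ν hν
  exacts [add_log_div_le_caraLoss hμ0 hμ1 d hν, caraLoss_le hμ0.le hμ1 hd hν]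

end CARA

open CARA in
theorem cara_single_crossing_general (μ d₁ d₂ x₁ x₂ : ℝ) (hμ0 : 0 < μ) (hμ1 : μ < 1)
    (hd2 : 0 ≤ d₂) (hd : d₂ < d₁)
    (hndom : x₂ - x₁ < d₁ - d₂) (hunfav : μ * (d₁ - d₂) < x₂ - x₁) :
    let CE : ℝ → ℝ → ℝ → ℝ := fun ν d x =>
      -x - (1 / ν) * Real.log ((1 - μ) + μ * Real.exp (ν * d))
    let Δ : ℝ → ℝ := fun ν => CE ν d₂ x₂ - CE ν d₁ x₁
    ContinuousOn Δ (Set.Ioi 0) ∧ StrictMonoOn Δ (Set.Ioi 0) ∧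
    (∀ᶠ ν in nhdsWithin 0 (Set.Ioi 0), Δ ν < 0) ∧
    (∀ᶠ ν in Filter.atTop, 0 < Δ ν) ∧
    (∃! νstar : ℝ, νstar ∈ Set.Ioi (0:ℝ) ∧ Δ νstar = 0 ∧
      ∀ ν ∈ Set.Ioi (0:ℝ), (0 < Δ ν ↔ νstar < ν)) := by
  intro CE Δ
  have hΔ : Δ = fun ν => x₁ - x₂ + (caraLoss μ d₁ ν - caraLoss μ d₂ ν) := by
    funext ν
    simp only [Δ, CE, caraLoss, bernCGF]
    ring
  rw [hΔ]
  have hmono := (strictMonoOn_caraLoss_sub_caraLoss hμ0 hμ1 hd2 hd).const_add (x₁ - x₂)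
  have hcont : ContinuousOn (fun ν => x₁ - x₂ + (caraLoss μ d₁ ν - caraLoss μ d₂ ν)) (Ioi 0) :=
    continuousOn_const.add
      ((continuousOn_caraLoss hμ0.le hμ1.le d₁).sub (continuousOn_caraLoss hμ0.le hμ1.le d₂))
  have hneg : ∀ᶠ ν in 𝓝[>] 0, x₁ - x₂ + (caraLoss μ d₁ ν - caraLoss μ d₂ ν) < 0 :=
    (((tendsto_caraLoss_nhdsGT_zero hμ0.le hμ1.le d₁).sub
      (tendsto_caraLoss_nhdsGT_zero hμ0.le hμ1.le d₂)).const_add _).eventually_lt_const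
      (by linarith)
  have hpos : ∀ᶠ ν in atTop, 0 < x₁ - x₂ + (caraLoss μ d₁ ν - caraLoss μ d₂ ν) :=
    (((tendsto_caraLoss_atTop hμ0 hμ1.le (hd2.trans hd.le)).sub
      (tendsto_caraLoss_atTop hμ0 hμ1.le hd2)).const_add _).eventually_const_lt
      (by linarith)
  obtain ⟨a, ha, ha0⟩ := (hneg.and self_mem_nhdsWithin).exists
  obtain ⟨b, hb, hb0⟩ := (hpos.and (eventually_gt_atTop 0)).exists
  exact ⟨hcont, hmono, hneg, hpos, hmono.existsUnique_zero_and_pos_iff isPreconnected_Ioi hcont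
    ha0 hb0 ha hb⟩

/-- Single crossing for CARA in the risk-aversion parameter: for contracts with
d₁ > d₂ ≥ 0, x₁ < x₂, μ(d₁-d₂) < x₂-x₁ < d₁-d₂, the certainty-equivalent difference
Δ(ν) = CE_ν(d₂,x₂) - CE_ν(d₁,x₁) is continuous and strictly increasing on (0,∞),
negative near 0⁺, positive at ∞, and has a unique zero ν* > 0 with the lower-deductible
contract strictly preferred iff ν > ν*. -/
theorem cara_single_crossing (μ d₁ d₂ x₁ x₂ : ℝ) (hμ0 : 0 < μ) (hμ1 : μ < 1)
    (hd2 : 0 ≤ d₂) (hd : d₂ < d₁) (hx1 : 0 ≤ x₁) (hx : x₁ < x₂)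
    (hndom : x₂ - x₁ < d₁ - d₂) (hunfav : μ * (d₁ - d₂) < x₂ - x₁) :
    let CE : ℝ → ℝ → ℝ → ℝ := fun ν d x =>
      -x - (1 / ν) * Real.log ((1 - μ) + μ * Real.exp (ν * d))
    let Δ : ℝ → ℝ := fun ν => CE ν d₂ x₂ - CE ν d₁ x₁
    ContinuousOn Δ (Set.Ioi 0) ∧ StrictMonoOn Δ (Set.Ioi 0) ∧
    (∀ᶠ ν in nhdsWithin 0 (Set.Ioi 0), Δ ν < 0) ∧
    (∀ᶠ ν in Filter.atTop, 0 < Δ ν) ∧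
    (∃! νstar : ℝ, νstar ∈ Set.Ioi (0:ℝ) ∧ Δ νstar = 0 ∧
      ∀ ν ∈ Set.Ioi (0:ℝ), (0 < Δ ν ↔ νstar < ν)) :=
  cara_single_crossing_general μ d₁ d₂ x₁ x₂ hμ0 hμ1 hd2 hd hndom hunfav
end

section
/- Single crossing for DT types with Prelec weighting: fix μ ∈ (0, 1/e) and two contracts with d₁ > d₂, x₁ < x₂, and ratio r = (x₂ - x₁)/(d₁ - d₂) ∈ (μ, 1/e). Then there is a unique ω* > 0 such that a DT agent with Prelec parameter ω strictly prefers the lower-deductible contract iff ω < ω*, is indifferent at ω = ω*, and strictly prefers the higher-deductible contract iff ω > ω*. -/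
/-- Single crossing for DT types with Prelec weighting: for μ ∈ (0,1/e) and contracts
with d₁ > d₂, x₁ < x₂, and r = (x₂-x₁)/(d₁-d₂) ∈ (μ, 1/e), there is a unique cutoff
ω* > 0 such that the DT agent strictly prefers the lower-deductible contract iff
ω < ω*, and is indifferent exactly at ω = ω*. -/
theorem prelec_dt_single_crossing (μ d₁ d₂ x₁ x₂ : ℝ)
    (hμ0 : 0 < μ) (hμ : μ < Real.exp (-1)) (hd : d₂ < d₁) (hx : x₁ < x₂)
    (hr1 : μ < (x₂ - x₁) / (d₁ - d₂))
    (hr2 : (x₂ - x₁) / (d₁ - d₂) < Real.exp (-1)) :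
    let Om : ℝ → ℝ := fun ω => Real.exp (-(-Real.log μ) ^ ω)
    let U : ℝ → ℝ → ℝ → ℝ := fun ω d x => -x - Om ω * d
    ∃ ωstar > (0:ℝ), ∀ ω > (0:ℝ),
      (U ω d₂ x₂ > U ω d₁ x₁ ↔ ω < ωstar) ∧
      (U ω d₂ x₂ = U ω d₁ x₁ ↔ ω = ωstar) := by
  intro Om U
  set r : ℝ := (x₂ - x₁) / (d₁ - d₂) with hr_def
  set L : ℝ := -Real.log μ with hL_def
  have hdd : (0:ℝ) < d₁ - d₂ := sub_pos.mpr hd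
  have hr0 : 0 < r := lt_trans hμ0 hr1
  have hL1 : 1 < L := by
    have := Real.log_lt_log hμ0 hμ
    rw [Real.log_exp] at this
    simp only [hL_def]; linarith
  have hL0 : 0 < L := lt_trans one_pos hL1
  have hlogr : Real.log r < -1 := by
    have := Real.log_lt_log hr0 hr2
    rwa [Real.log_exp] at this
  have hneg1 : 1 < -Real.log r := by linarith
  have hneg0 : 0 < -Real.log r := by linarith
  have hlogL : 0 < Real.log L := Real.log_pos hL1
  refine ⟨Real.log (-Real.log r) / Real.log L, div_pos (Real.log_pos hneg1) hlogL, ?_⟩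
  set ωs : ℝ := Real.log (-Real.log r) / Real.log L with hωs_def
  have hkey : L ^ ωs = -Real.log r := by
    rw [Real.rpow_def_of_pos hL0, hωs_def, mul_comm,
      div_mul_cancel₀ _ (ne_of_gt hlogL), Real.exp_log hneg0]
  intro ω hω
  have hpref : (U ω d₂ x₂ > U ω d₁ x₁) ↔ r < Om ω := by
    simp only [U]
    rw [hr_def, div_lt_iff₀ hdd]
    constructor <;> intro h <;> nlinarith
  have hiff : (r < Om ω) ↔ ω < ωs := by
    show r < Real.exp (-(L ^ ω)) ↔ ω < ωs
    rw [← Real.exp_log hr0, Real.exp_lt_exp, lt_neg, ← hkey,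
      Real.rpow_lt_rpow_left_iff hL1]
  have hUeq : (U ω d₂ x₂ = U ω d₁ x₁) ↔ Om ω = r := by
    simp only [U]
    rw [hr_def, eq_div_iff (ne_of_gt hdd)]
    constructor <;> intro h <;> nlinarith
  have hOmiff : Om ω = r ↔ ω = ωs := by
    show Real.exp (-(L ^ ω)) = r ↔ ω = ωs
    rw [← Real.exp_log hr0, Real.exp_eq_exp, neg_eq_iff_eq_neg, ← hkey]
    have hsm : StrictMono fun y : ℝ => L ^ y := fun a b h =>
      (Real.rpow_lt_rpow_left_iff hL1).mpr h
    exact hsm.injective.eq_iff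
  exact ⟨hpref.trans hiff, hUeq.trans hOmiff⟩
end

section
/- The Prelec function with ω ∈ (0,1) is strictly subadditive on small probabilities: for μ₁, μ₂ ∈ (0,1) with μ₁ + μ₂ < 1 and μ₁ + μ₂ ≤ 1/e, one has exp(-(-log(μ₁+μ₂))^ω) < exp(-(-log μ₁)^ω) + exp(-(-log μ₂)^ω). -/
private lemma prelec_mono_aux (ω : ℝ) (hω0 : 0 < ω) (hω1 : ω < 1) :
    StrictMonoOn (fun t : ℝ => t - t ^ ω) (Set.Ici 1) := by
  apply strictMonoOn_of_deriv_pos (convex_Ici 1)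
  · exact continuousOn_id.sub fun x hx =>
      (Real.continuousAt_rpow_const x ω (Or.inl (by
        have : (1:ℝ) ≤ x := hx; linarith))).continuousWithinAt
  · intro x hx
    rw [interior_Ici] at hx
    have hx1 : (1:ℝ) < x := hx
    have hx0 : x ≠ 0 := by linarith
    have hd : HasDerivAt (fun t : ℝ => t - t ^ ω) (1 - ω * x ^ (ω - 1)) x :=
      (hasDerivAt_id x).sub (Real.hasDerivAt_rpow_const (Or.inl hx0))
    rw [hd.deriv]
    have hlt : x ^ (ω - 1) < 1 :=
      Real.rpow_lt_one_of_one_lt_of_neg hx1 (by linarith)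
    have hpos : 0 ≤ x ^ (ω - 1) := Real.rpow_nonneg (by linarith) _
    nlinarith

private lemma prelec_key (ω a b : ℝ) (hω0 : 0 < ω) (hω1 : ω < 1)
    (ha : 0 < a) (hab : a < b) (hb : b ≤ Real.exp (-1)) :
    Real.exp (-(-Real.log b) ^ ω) * a < Real.exp (-(-Real.log a) ^ ω) * b := by
  set ta := -Real.log a with hta
  set tb := -Real.log b with htb
  have hb0 : 0 < b := lt_trans ha hab
  have htb1 : (1:ℝ) ≤ tb := by
    have := Real.log_le_log hb0 hb
    rw [Real.log_exp] at this
    simp only [htb]; linarith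
  have htlt : tb < ta := by
    have := Real.log_lt_log ha hab
    simp only [hta, htb]; linarith
  have hta1 : (1:ℝ) ≤ ta := le_of_lt (lt_of_le_of_lt htb1 htlt)
  have hmono := prelec_mono_aux ω hω0 hω1 htb1 hta1 htlt
  simp only at hmono
  have hea : a = Real.exp (-ta) := by
    simp only [hta, neg_neg]; rw [Real.exp_log ha]
  have heb : b = Real.exp (-tb) := by
    simp only [htb, neg_neg]; rw [Real.exp_log hb0]
  rw [hea, heb, ← Real.exp_add, ← Real.exp_add]
  exact Real.exp_lt_exp.mpr (by linarith)

/-- The Prelec function with ω ∈ (0,1) is strictly subadditive on small probabilities: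
for μ₁, μ₂ ∈ (0,1) with μ₁ + μ₂ < 1 and μ₁ + μ₂ ≤ 1/e,
Ω_ω(μ₁+μ₂) < Ω_ω(μ₁) + Ω_ω(μ₂). -/
theorem prelec_strict_subadditive (ω μ₁ μ₂ : ℝ) (hω0 : 0 < ω) (hω1 : ω < 1)
    (h1 : 0 < μ₁) (h1' : μ₁ < 1) (h2 : 0 < μ₂) (h2' : μ₂ < 1)
    (hs : μ₁ + μ₂ < 1) (hs2 : μ₁ + μ₂ ≤ Real.exp (-1)) :
    Real.exp (-(-Real.log (μ₁ + μ₂)) ^ ω) <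
      Real.exp (-(-Real.log μ₁) ^ ω) + Real.exp (-(-Real.log μ₂) ^ ω) := by
  have hk1 := prelec_key ω μ₁ (μ₁ + μ₂) hω0 hω1 h1 (by linarith) hs2
  have hk2 := prelec_key ω μ₂ (μ₁ + μ₂) hω0 hω1 h2 (by linarith) hs2
  have hspos : 0 < μ₁ + μ₂ := by linarith
  nlinarith
end

section
/- Non-monotone ranking across bundles: with CARA certainty equivalents CE_ν(d, x) = -x - (1/ν)log((1-μ)+μe^{νd}), there exist single-crossing contexts and bundles I_{ℓ,q}, I_{k,r} with ℓ > k and q < r, i.e. parameter values (d's, x's, μ's), for which the bundle comparison ν ↦ [CE_ν(d₂,x₂)+CE_ν(d₁′,x₁′)] - [CE_ν(d₁,x₁)+CE_ν(d₂′,x₂′)] is not monotone in ν. -/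
/-- CARA certainty equivalent of the insurance contract (d, x) facing a loss with
probability μ, at risk aversion ν. -/
noncomputable def caraCE (ν d x μ : ℝ) : ℝ :=
  -x - (1 / ν) * Real.log ((1 - μ) + μ * Real.exp (ν * d))

private lemma eval_aux (ν x x' y y' : ℝ) :
    (caraCE ν 0 x (1/2) + caraCE ν 1 y' (1/10)) - (caraCE ν 1 y (1/2) + caraCE ν 0 x' (1/10)) =
      (x' - x + y - y') + (1/ν) * (Real.log ((1 + Real.exp ν) / 2)
        - Real.log ((9 + Real.exp ν) / 10)) := by
  simp only [caraCE, mul_zero, mul_one, Real.exp_zero]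
  rw [show (1:ℝ) - 1/2 + 1/2 = 1 by norm_num,
      show (1:ℝ) - 1/10 + 1/10 = 1 by norm_num,
      show (1:ℝ) - 1/2 + 1/2 * Real.exp ν = (1 + Real.exp ν) / 2 by ring,
      show (1:ℝ) - 1/10 + 1/10 * Real.exp ν = (9 + Real.exp ν) / 10 by ring,
      Real.log_one]
  ring

set_option maxHeartbeats 1000000 in
private lemma keyA : Real.log ((1 + Real.exp 1) / 2) - Real.log ((9 + Real.exp 1) / 10)
    < (1/2) * (Real.log ((1 + Real.exp 2) / 2) - Real.log ((9 + Real.exp 2) / 10)) := by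
  have hE1 : (2.7182818283 : ℝ) < Real.exp 1 := Real.exp_one_gt_d9
  have hE2 : Real.exp 1 < 2.7182818286 := Real.exp_one_lt_d9
  set E := Real.exp 1 with hE
  have h2 : Real.exp 2 = E ^ 2 := by
    rw [show (2:ℝ) = 1 + 1 by norm_num, Real.exp_add]; ring
  have hEpos : (0:ℝ) < E := by linarith
  rw [h2]
  have ha1 : (0:ℝ) < (1 + E) / 2 := by positivity
  have hb1 : (0:ℝ) < (9 + E) / 10 := by positivity
  have ha2 : (0:ℝ) < (1 + E ^ 2) / 2 := by positivity
  have hb2 : (0:ℝ) < (9 + E ^ 2) / 10 := by positivity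
  rw [← Real.log_div (ne_of_gt ha1) (ne_of_gt hb1),
      ← Real.log_div (ne_of_gt ha2) (ne_of_gt hb2),
      show ((1 + E) / 2) / ((9 + E) / 10) = 5 * (1 + E) / (9 + E) by
        field_simp; ring,
      show ((1 + E ^ 2) / 2) / ((9 + E ^ 2) / 10) = 5 * (1 + E ^ 2) / (9 + E ^ 2) by
        field_simp; ring]
  have key : (5 * (1 + E) / (9 + E)) ^ 2 < 5 * (1 + E ^ 2) / (9 + E ^ 2) := by
    rw [div_pow, div_lt_div_iff₀ (by positivity) (by positivity)]
    have b2l : (7.389056 : ℝ) < E ^ 2 := by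
      nlinarith [mul_pos (show (0:ℝ) < E - 2.7182818283 by linarith)
        (show (0:ℝ) < E + 2.7182818283 by linarith)]
    have b2u : E ^ 2 < 7.389057 := by
      nlinarith [mul_pos (show (0:ℝ) < 2.7182818286 - E by linarith)
        (show (0:ℝ) < 2.7182818286 + E by linarith)]
    have b3l : (20.08553 : ℝ) < E ^ 3 := by
      nlinarith [mul_pos (show (0:ℝ) < E - 2.7182818283 by linarith)
        (show (0:ℝ) < E ^ 2 - 7.389056 by linarith)]
    have b3u : E ^ 3 < 20.08554 := by
      nlinarith [mul_pos (show (0:ℝ) < 2.7182818286 - E by linarith)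
        (show (0:ℝ) < 7.389057 - E ^ 2 by linarith)]
    have b4l : (54.598148 : ℝ) < E ^ 4 := by
      nlinarith [mul_pos (show (0:ℝ) < E ^ 2 - 7.389056 by linarith)
        (show (0:ℝ) < E ^ 2 + 7.389056 by linarith)]
    have b4u : E ^ 4 < 54.598164 := by
      nlinarith [mul_pos (show (0:ℝ) < 7.389057 - E ^ 2 by linarith)
        (show (0:ℝ) < 7.389057 + E ^ 2 by linarith)]
    nlinarith [b2l, b2u, b3l, b3u, b4l, b4u, hE1, hE2]
  have hlog := Real.log_lt_log (by positivity) key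
  rw [Real.log_pow] at hlog
  push_cast at hlog
  linarith

set_option maxHeartbeats 1000000 in
private lemma keyB : (1/4) * (Real.log ((1 + Real.exp 4) / 2) - Real.log ((9 + Real.exp 4) / 10))
    < (1/2) * (Real.log ((1 + Real.exp 2) / 2) - Real.log ((9 + Real.exp 2) / 10)) := by
  have hE1 : (2.7182818283 : ℝ) < Real.exp 1 := Real.exp_one_gt_d9
  have hE2 : Real.exp 1 < 2.7182818286 := Real.exp_one_lt_d9
  set E := Real.exp 1 with hE
  have h2 : Real.exp 2 = E ^ 2 := by
    rw [show (2:ℝ) = 1 + 1 by norm_num, Real.exp_add]; ring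
  have h4 : Real.exp 4 = E ^ 4 := by
    rw [show (4:ℝ) = 2 + 2 by norm_num, Real.exp_add, h2]; ring
  have hEpos : (0:ℝ) < E := by linarith
  rw [h2, h4]
  have ha4 : (0:ℝ) < (1 + E ^ 4) / 2 := by positivity
  have hb4 : (0:ℝ) < (9 + E ^ 4) / 10 := by positivity
  have ha2 : (0:ℝ) < (1 + E ^ 2) / 2 := by positivity
  have hb2 : (0:ℝ) < (9 + E ^ 2) / 10 := by positivity
  rw [← Real.log_div (ne_of_gt ha4) (ne_of_gt hb4),
      ← Real.log_div (ne_of_gt ha2) (ne_of_gt hb2),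
      show ((1 + E ^ 4) / 2) / ((9 + E ^ 4) / 10) = 5 * (1 + E ^ 4) / (9 + E ^ 4) by
        field_simp; ring,
      show ((1 + E ^ 2) / 2) / ((9 + E ^ 2) / 10) = 5 * (1 + E ^ 2) / (9 + E ^ 2) by
        field_simp; ring]
  have key : 5 * (1 + E ^ 4) / (9 + E ^ 4) < (5 * (1 + E ^ 2) / (9 + E ^ 2)) ^ 2 := by
    rw [div_pow, div_lt_div_iff₀ (by positivity) (by positivity)]
    have b2l : (7.389056 : ℝ) < E ^ 2 := by
      nlinarith [mul_pos (show (0:ℝ) < E - 2.7182818283 by linarith)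
        (show (0:ℝ) < E + 2.7182818283 by linarith)]
    have b2u : E ^ 2 < 7.389057 := by
      nlinarith [mul_pos (show (0:ℝ) < 2.7182818286 - E by linarith)
        (show (0:ℝ) < 2.7182818286 + E by linarith)]
    have b4l : (54.598148 : ℝ) < E ^ 4 := by
      nlinarith [mul_pos (show (0:ℝ) < E ^ 2 - 7.389056 by linarith)
        (show (0:ℝ) < E ^ 2 + 7.389056 by linarith)]
    have b4u : E ^ 4 < 54.598164 := by
      nlinarith [mul_pos (show (0:ℝ) < 7.389057 - E ^ 2 by linarith)
        (show (0:ℝ) < 7.389057 + E ^ 2 by linarith)]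
    have b6l : (403.42 : ℝ) < E ^ 6 := by
      nlinarith [mul_pos (show (0:ℝ) < E ^ 2 - 7.389056 by linarith)
        (show (0:ℝ) < E ^ 4 - 54.598148 by linarith)]
    have b6u : E ^ 6 < 403.43 := by
      nlinarith [mul_pos (show (0:ℝ) < 7.389057 - E ^ 2 by linarith)
        (show (0:ℝ) < 54.598164 - E ^ 4 by linarith)]
    have b8l : (2980.95 : ℝ) < E ^ 8 := by
      nlinarith [mul_pos (show (0:ℝ) < E ^ 4 - 54.598148 by linarith)
        (show (0:ℝ) < E ^ 4 + 54.598148 by linarith)]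
    have b8u : E ^ 8 < 2980.97 := by
      nlinarith [mul_pos (show (0:ℝ) < 54.598164 - E ^ 4 by linarith)
        (show (0:ℝ) < 54.598164 + E ^ 4 by linarith)]
    nlinarith [b2l, b2u, b4l, b4u, b6l, b6u, b8l, b8u]
  have hlog := Real.log_lt_log (by positivity) key
  rw [Real.log_pow] at hlog
  push_cast at hlog
  linarith

/-- Non-monotone ranking across bundles: there exist two single-crossing CARA contexts
(each satisfying the in-context price/deductible conditions guaranteeing single
crossing) such that the comparison between the bundle mixing the safer alternative in
context I with the riskier one in context II and the opposite bundle is not monotone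
in ν on (0,∞). -/
theorem bundle_comparison_not_monotone :
    ∃ (μ μ' d₁ x₁ d₂ x₂ d₁' x₁' d₂' x₂' : ℝ),
      0 < μ ∧ μ < 1 ∧ 0 < μ' ∧ μ' < 1 ∧
      0 ≤ d₂ ∧ d₂ < d₁ ∧ 0 ≤ x₁ ∧ x₁ < x₂ ∧
      μ * (d₁ - d₂) < x₂ - x₁ ∧ x₂ - x₁ < d₁ - d₂ ∧
      0 ≤ d₂' ∧ d₂' < d₁' ∧ 0 ≤ x₁' ∧ x₁' < x₂' ∧
      μ' * (d₁' - d₂') < x₂' - x₁' ∧ x₂' - x₁' < d₁' - d₂' ∧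
      ¬ MonotoneOn
        (fun ν : ℝ =>
          (caraCE ν d₂ x₂ μ + caraCE ν d₁' x₁' μ') -
            (caraCE ν d₁ x₁ μ + caraCE ν d₂' x₂' μ'))
        (Set.Ioi 0) ∧
      ¬ AntitoneOn
        (fun ν : ℝ =>
          (caraCE ν d₂ x₂ μ + caraCE ν d₁' x₁' μ') -
            (caraCE ν d₁ x₁ μ + caraCE ν d₂' x₂' μ'))
        (Set.Ioi 0) := by
  refine ⟨1/2, 1/10, 1, 0, 0, 3/4, 1, 0, 0, 1/2, by norm_num, by norm_num, by norm_num,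
    by norm_num, le_refl 0, by norm_num, le_refl 0, by norm_num, by norm_num, by norm_num,
    le_refl 0, by norm_num, le_refl 0, by norm_num, by norm_num, by norm_num, ?_, ?_⟩
  · intro h
    have h24 := h (by norm_num : (2:ℝ) ∈ Set.Ioi 0) (by norm_num : (4:ℝ) ∈ Set.Ioi 0)
      (by norm_num : (2:ℝ) ≤ 4)
    simp only [eval_aux] at h24
    have := keyB
    linarith
  · intro h
    have h12 := h (by norm_num : (1:ℝ) ∈ Set.Ioi 0) (by norm_num : (2:ℝ) ∈ Set.Ioi 0)
      (by norm_num : (1:ℝ) ≤ 2)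
    simp only [eval_aux] at h12
    have := keyA
    linarith
end

section
/- Dominated alternative under proportional pricing (the $200 collision deductible phenomenon): under single crossing, if for a triplet of alternatives with d₁ > d₂ > d₃ and prices x₁ < x₂ < x₃ the cutoffs satisfy Z₁₂ ≥ Z₁₃ (i.e., the coefficient at which the agent is indifferent between alternatives 1 and 2 is at least the coefficient at which she is indifferent between 1 and 3), then for every coefficient ζ alternative 2 is weakly dominated: either alternative 1 or alternative 3 is weakly preferred to alternative 2, with strict preference except possibly at ζ = Z₁₂ = Z₁₃. Hence under full consideration alternative 2 is chosen with probability 0 whenever the coefficient distribution is atomless. -/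
/-!
Alternative 2 can only be weakly optimal where it beats 1, i.e. at `ζ ≥ Z₁₂`, and where it
beats 3, i.e. at `ζ ≤ Z₂₃`. At `ζ = Z₁₃ ≤ Z₁₂` we have `U₂ ≤ U₁ = U₃`, which forces
`Z₂₃ ≤ Z₁₃`; so both conditions together give `Z₁₂ ≤ ζ ≤ Z₂₃ ≤ Z₁₃ ≤ Z₁₂`, a single point.
-/

open MeasureTheory

def SingleCrossing (Ua Ub : ℝ → ℝ) (Z : ℝ) : Prop :=
  ∀ ζ, (ζ < Z → Ub ζ < Ua ζ) ∧ (ζ = Z → Ub ζ = Ua ζ) ∧ (Z < ζ → Ua ζ < Ub ζ)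

namespace SingleCrossing

variable {Ua Ub Uc : ℝ → ℝ} {Z Z' Z'' ζ : ℝ}

theorem lt_of_lt (h : SingleCrossing Ua Ub Z) (hζ : ζ < Z) : Ub ζ < Ua ζ := (h ζ).1 hζ

theorem apply_cutoff (h : SingleCrossing Ua Ub Z) : Ub Z = Ua Z := (h Z).2.1 rfl

theorem lt_of_gt (h : SingleCrossing Ua Ub Z) (hζ : Z < ζ) : Ua ζ < Ub ζ := (h ζ).2.2 hζ

theorem le_of_le (h : SingleCrossing Ua Ub Z) (hζ : ζ ≤ Z) : Ub ζ ≤ Ua ζ := by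
  rcases hζ.lt_or_eq with hlt | rfl
  · exact (h.lt_of_lt hlt).le
  · exact h.apply_cutoff.le

theorem cutoff_le_of_le (h : SingleCrossing Ua Ub Z) (hle : Ua ζ ≤ Ub ζ) : Z ≤ ζ :=
  not_lt.1 fun hζ => (h.lt_of_lt hζ).not_ge hle

theorem cutoff_le_cutoff (hab : SingleCrossing Ua Ub Z) (hac : SingleCrossing Ua Uc Z')
    (hbc : SingleCrossing Ub Uc Z'') (hZ : Z' ≤ Z) : Z'' ≤ Z' :=
  hbc.cutoff_le_of_le <| calc
    Ub Z' ≤ Ua Z' := hab.le_of_le hZ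
    _ = Uc Z' := hac.apply_cutoff.symm

end SingleCrossing

section Triplet

variable {U1 U2 U3 : ℝ → ℝ} {Z12 Z13 Z23 ζ : ℝ}

theorem middle_lt_or_lt (h12 : SingleCrossing U1 U2 Z12) (h13 : SingleCrossing U1 U3 Z13)
    (h23 : SingleCrossing U2 U3 Z23) (hZ : Z13 ≤ Z12) (hζ : ¬(ζ = Z12 ∧ Z12 = Z13)) :
    U2 ζ < U1 ζ ∨ U2 ζ < U3 ζ := by
  rcases lt_or_ge ζ Z12 with hlt | hge
  · exact .inl (h12.lt_of_lt hlt)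
  · have hZ13 : Z13 < ζ := lt_of_not_ge fun hle =>
      hζ ⟨le_antisymm (hle.trans hZ) hge, le_antisymm (hge.trans hle) hZ⟩
    exact .inr (h23.lt_of_gt ((h12.cutoff_le_cutoff h13 h23 hZ).trans_lt hZ13))

theorem setOf_middle_best_subset (h12 : SingleCrossing U1 U2 Z12)
    (h13 : SingleCrossing U1 U3 Z13) (h23 : SingleCrossing U2 U3 Z23) (hZ : Z13 ≤ Z12) :
    {ζ : ℝ | U1 ζ ≤ U2 ζ ∧ U3 ζ ≤ U2 ζ} ⊆ {Z12} := by
  rintro ζ ⟨h1, h3⟩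
  by_contra hne
  rcases middle_lt_or_lt h12 h13 h23 hZ fun hc => hne hc.1 with h | h
  · exact h.not_ge h1
  · exact h.not_ge h3

end Triplet

/-- Dominated alternative under proportional pricing: given single-crossing cutoffs
Z₁₂, Z₁₃, Z₂₃ for a triplet of alternatives, if Z₁₂ ≥ Z₁₃ then for every coefficient ζ
alternative 2 is weakly dominated by alternative 1 or alternative 3, strictly so
except possibly at ζ = Z₁₂ = Z₁₃; hence under full consideration alternative 2 is
chosen with probability zero for any atomless coefficient distribution. -/
theorem middle_alternative_dominated (U1 U2 U3 : ℝ → ℝ) (Z12 Z13 Z23 : ℝ)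
    (h12 : ∀ ζ, (ζ < Z12 → U2 ζ < U1 ζ) ∧ (ζ = Z12 → U2 ζ = U1 ζ) ∧
      (Z12 < ζ → U1 ζ < U2 ζ))
    (h13 : ∀ ζ, (ζ < Z13 → U3 ζ < U1 ζ) ∧ (ζ = Z13 → U3 ζ = U1 ζ) ∧
      (Z13 < ζ → U1 ζ < U3 ζ))
    (h23 : ∀ ζ, (ζ < Z23 → U3 ζ < U2 ζ) ∧ (ζ = Z23 → U3 ζ = U2 ζ) ∧
      (Z23 < ζ → U2 ζ < U3 ζ))
    (hZ : Z13 ≤ Z12) :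
    (∀ ζ, U2 ζ ≤ U1 ζ ∨ U2 ζ ≤ U3 ζ) ∧
    (∀ ζ, ¬(ζ = Z12 ∧ Z12 = Z13) → (U2 ζ < U1 ζ ∨ U2 ζ < U3 ζ)) ∧
    (∀ (m : Measure ℝ) [NullSingletonClass m],
      m {ζ : ℝ | U1 ζ ≤ U2 ζ ∧ U3 ζ ≤ U2 ζ} = 0) := by
  have strict : ∀ ζ, ¬(ζ = Z12 ∧ Z12 = Z13) → (U2 ζ < U1 ζ ∨ U2 ζ < U3 ζ) :=
    fun _ => middle_lt_or_lt h12 h13 h23 hZ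
  refine ⟨fun ζ => ?_, strict, fun m _ => ?_⟩
  · by_cases hc : ζ = Z12 ∧ Z12 = Z13
    · exact .inl (hc.1 ▸ (SingleCrossing.apply_cutoff h12).le)
    · exact (strict ζ hc).imp le_of_lt le_of_lt
  · exact measure_mono_null (setOf_middle_best_subset h12 h13 h23 hZ) (measure_singleton Z12)
end

section
/- Preferred-within-triplet characterization: under single crossing, for a triplet of alternatives 1, 2, 3 (d₁ > d₂ > d₃, x₁ < x₂ < x₃) each alternative is strictly preferred to the other two for some coefficient value if and only if the pairwise cutoffs satisfy Z₁₂ < Z₁₃ < Z₂₃ (equivalently Z₁₂ < Z₂₃). -/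
lemma sign_of_mono {f : ℝ → ℝ} (hm : StrictMono f) {z : ℝ} (hz : f z = 0) (x : ℝ) :
    (f x < 0 ↔ x < z) ∧ (0 < f x ↔ z < x) := by
  constructor
  · constructor
    · intro h
      by_contra hx
      have := hm.le_iff_le.mpr (not_lt.mp hx)
      rw [hz] at this; linarith
    · intro h; have := hm h; rw [hz] at this; linarith
  · constructor
    · intro h
      by_contra hx
      have := hm.le_iff_le.mpr (not_lt.mp hx)
      rw [hz] at this; linarith
    · intro h; have := hm h; rw [hz] at this; linarith

/-- Preferred-within-triplet characterization: under single crossing (each pairwise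
utility difference continuous, strictly increasing, vanishing at its cutoff), each of
the three alternatives is strictly preferred to the other two for some coefficient
value if and only if the pairwise cutoffs satisfy Z₁₂ < Z₁₃ < Z₂₃. -/
theorem preferred_within_triplet (U1 U2 U3 : ℝ → ℝ) (Z12 Z13 Z23 : ℝ)
    (hm12 : StrictMono (fun ζ => U2 ζ - U1 ζ))
    (hc12 : Continuous (fun ζ => U2 ζ - U1 ζ))
    (hz12 : U2 Z12 = U1 Z12)
    (hm13 : StrictMono (fun ζ => U3 ζ - U1 ζ))
    (hc13 : Continuous (fun ζ => U3 ζ - U1 ζ))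
    (hz13 : U3 Z13 = U1 Z13)
    (hm23 : StrictMono (fun ζ => U3 ζ - U2 ζ))
    (hc23 : Continuous (fun ζ => U3 ζ - U2 ζ))
    (hz23 : U3 Z23 = U2 Z23) :
    ((∃ ζ, U2 ζ < U1 ζ ∧ U3 ζ < U1 ζ) ∧
     (∃ ζ, U1 ζ < U2 ζ ∧ U3 ζ < U2 ζ) ∧
     (∃ ζ, U1 ζ < U3 ζ ∧ U2 ζ < U3 ζ)) ↔ (Z12 < Z13 ∧ Z13 < Z23) := by
  have h12 := sign_of_mono hm12 (show U2 Z12 - U1 Z12 = 0 by linarith)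
  have h13 := sign_of_mono hm13 (show U3 Z13 - U1 Z13 = 0 by linarith)
  have h23 := sign_of_mono hm23 (show U3 Z23 - U2 Z23 = 0 by linarith)
  constructor
  · rintro ⟨-, ⟨ζ, h1, h2⟩, -⟩
    -- ζ > Z12 and ζ < Z23
    have hZ12 : Z12 < ζ := (h12 ζ).2.mp (by linarith)
    have hZ23 : ζ < Z23 := (h23 ζ).1.mp (by linarith)
    have hZ : Z12 < Z23 := hZ12.trans hZ23
    constructor
    · by_contra h
      push_neg at h
      -- Z13 ≤ Z12: at Z13, U2 ≤ U1 and U3 = U1 so U3 ≥ U2 ⇒ Z23 ≤ Z13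
      have h1' : ¬ (0 < U2 Z13 - U1 Z13) := by
        intro hp
        exact absurd ((h12 Z13).2.mp hp) (not_lt.mpr h)
      have h2' : ¬ (U3 Z13 - U2 Z13 < 0) := by
        intro hn; linarith
      have := (h23 Z13).1
      have : ¬ Z13 < Z23 := fun hh => h2' (((h23 Z13).1).mpr hh)
      linarith
    · by_contra h
      push_neg at h
      -- Z23 ≤ Z13: at Z13, U3 ≥ U2, U3 = U1 ⇒ U2 ≤ U1 ⇒ Z13 ≤ Z12
      have h1' : ¬ (U3 Z13 - U2 Z13 < 0) := by
        intro hn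
        exact absurd ((h23 Z13).1.mp hn) (not_lt.mpr h)
      have h2' : ¬ (0 < U2 Z13 - U1 Z13) := by
        intro hp; linarith
      have : ¬ Z12 < Z13 := fun hh => h2' (((h12 Z13).2).mpr hh)
      linarith
  · rintro ⟨ha, hb⟩
    refine ⟨⟨min Z12 Z13 - 1, ?_, ?_⟩, ⟨Z13, ?_, ?_⟩, ⟨max Z13 Z23 + 1, ?_, ?_⟩⟩
    · have := (h12 (min Z12 Z13 - 1)).1.mpr (by
        have := min_le_left Z12 Z13; linarith)
      linarith
    · have := (h13 (min Z12 Z13 - 1)).1.mpr (by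
        have := min_le_right Z12 Z13; linarith)
      linarith
    · have := (h12 Z13).2.mpr ha
      linarith
    · have := (h23 Z13).1.mpr hb
      linarith
    · have := (h13 (max Z13 Z23 + 1)).2.mpr (by
        have := le_max_left Z13 Z23; linarith)
      linarith
    · have := (h23 (max Z13 Z23 + 1)).2.mpr (by
        have := le_max_right Z13 Z23; linarith)
      linarith
end
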